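/- Let F = (f_1, …, f_m) : ℝⁿ → ℝᵐ be continuously differentiable and quasi-convex, β ∈ (0,1), and let (p^k), (v^k), (t_k) be infinite sequences generated by the steepest descent method with Armijo rule. If the set U := {p ∈ ℝⁿ : f_i(p) ≤ f_i(p^k) for all i = 1, …, m and all k ∈ ℕ} is nonempty, then the sequence (p^k) converges to a point p̄ ∈ ℝⁿ that is Pareto critical for F. -/

import Mathlib

noncomputable section

open Filter

/-- The set of candidate Armijo steplengths `{2⁻ʲ : j ∈ ℕ}` at the point `p`
in the direction `v`, for the multicriteria function `f` with parameter `β`. -/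
def armijoSet {n m : ℕ} (f : Fin m → EuclideanSpace ℝ (Fin n) → ℝ) (β : ℝ)
    (p v : EuclideanSpace ℝ (Fin n)) : Set ℝ :=
  {t : ℝ | (∃ j : ℕ, t = (1 / 2 : ℝ) ^ j) ∧
    ∀ i, f i (p + t • v) ≤ f i p + β * t * (inner ℝ (gradient (f i) p) v : ℝ)}

/-!
For `q` below every iterate, quasi-convexity gives `⟪∇fᵢ(pᵏ), q - pᵏ⟫ ≤ 0` for all `i`, and the
variational inequality of the steepest descent direction turns this into `⟪vᵏ, q - pᵏ⟫ ≥ 0`.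
With `tₖ ≤ 1` this yields the quasi-Fejér inequality `‖pᵏ⁺¹ - q‖² ≤ ‖pᵏ - q‖² + tₖ‖vᵏ‖²`, where
`∑ tₖ‖vᵏ‖² < ∞` by the Armijo decrease of each `fᵢ(pᵏ)` and the lower bound `fᵢ(q)`. Hence
`(pᵏ)` is bounded. Along a subsequence `(pᵏ, vᵏ) → (p̄, v̄)`, and `v̄ = 0`: otherwise the steps
`tₖ` tend to zero although doubling them would still satisfy the Armijo rule. So `p̄` is Pareto
critical; it lies below every iterate since each `fᵢ(pᵏ)` decreases, so the quasi-Fejér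
inequality at `q = p̄` forces the whole sequence to converge to `p̄`.
-/

open Set Topology Bornology
open scoped RealInnerProductSpace Gradient

theorem exists_pos_mul_add_sq_mul_neg {a : ℝ} (ha : a < 0) (b : ℝ) :
    ∃ s > 0, s * a + s ^ 2 * b < 0 := by
  have hs : 0 < -a / (|b| + 1) := div_pos (neg_pos.2 ha) (by positivity)
  refine ⟨-a / (|b| + 1), hs, ?_⟩
  have key : -a / (|b| + 1) * |b| < -a := by
    rw [div_mul_eq_mul_div, div_lt_iff₀ (by positivity)]
    nlinarith [abs_nonneg b]
  nlinarith [le_abs_self b, mul_lt_mul_of_pos_left key hs]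

section QuasiFejer

variable {X : Type*} [PseudoMetricSpace X] {x : ℕ → X} {q : X} {ε : ℕ → ℝ}

theorem dist_sq_le_add_tsum_of_quasiFejer (hε : Summable ε) (hε0 : ∀ k, 0 ≤ ε k)
    (h : ∀ k, dist (x (k + 1)) q ^ 2 ≤ dist (x k) q ^ 2 + ε k) (k : ℕ) :
    dist (x k) q ^ 2 ≤ dist (x 0) q ^ 2 + ∑' j, ε j := by
  have hpartial : dist (x k) q ^ 2 ≤ dist (x 0) q ^ 2 + ∑ j ∈ Finset.range k, ε j := by
    induction k with
    | zero => simp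
    | succ k ih => rw [Finset.sum_range_succ]; linarith [h k]
  linarith [hε.sum_le_tsum (Finset.range k) (fun j _ => hε0 j)]

theorem isBounded_range_of_quasiFejer (hε : Summable ε) (hε0 : ∀ k, 0 ≤ ε k)
    (h : ∀ k, dist (x (k + 1)) q ^ 2 ≤ dist (x k) q ^ 2 + ε k) : IsBounded (range x) := by
  refine Metric.isBounded_closedBall (x := q)
    (r := √(dist (x 0) q ^ 2 + ∑' j, ε j)) |>.subset ?_
  rintro _ ⟨k, rfl⟩
  exact Real.le_sqrt_of_sq_le (dist_sq_le_add_tsum_of_quasiFejer hε hε0 h k)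

/-- Adding the tail sums makes `dist (x k) q ^ 2 + ∑_{j ≥ k} ε j` antitone, so the whole
sequence follows the subsequence to `q`. -/
theorem tendsto_of_quasiFejer_of_subseq (hε : Summable ε) (hε0 : ∀ k, 0 ≤ ε k)
    (h : ∀ k, dist (x (k + 1)) q ^ 2 ≤ dist (x k) q ^ 2 + ε k) {φ : ℕ → ℕ}
    (hφ : StrictMono φ) (hsub : Tendsto (x ∘ φ) atTop (𝓝 q)) : Tendsto x atTop (𝓝 q) := by
  set b : ℕ → ℝ := fun k => dist (x k) q ^ 2 + ∑' j, ε (j + k)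
  have hb : Antitone b := antitone_nat_of_succ_le fun k => by
    have htail : ∑' j, ε (j + k) = ε k + ∑' j, ε (j + (k + 1)) := by
      rw [((summable_nat_add_iff k).2 hε).tsum_eq_zero_add]
      simp only [zero_add, add_assoc, add_comm 1 k]
    simp only [b, htail]
    linarith [h k]
  have hbφ : Tendsto (b ∘ φ) atTop (𝓝 0) := by
    have hd : Tendsto (fun j => dist (x (φ j)) q ^ 2) atTop (𝓝 0) := by
      simpa using ((tendsto_iff_dist_tendsto_zero.1 hsub).pow 2)
    have hsum := hd.add ((tendsto_sum_nat_add ε).comp hφ.tendsto_atTop)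
    rwa [add_zero] at hsum
  have hb0 := (tendsto_iff_tendsto_subseq_of_antitone hb hφ.tendsto_atTop).2 hbφ
  have hsq : Tendsto (fun k => dist (x k) q ^ 2) atTop (𝓝 0) :=
    squeeze_zero (fun k => by positivity)
      (fun k => le_add_of_nonneg_right (tsum_nonneg fun j => hε0 _)) hb0
  rw [tendsto_iff_dist_tendsto_zero]
  simpa [Real.sqrt_sq dist_nonneg] using hsq.sqrt

end QuasiFejer

section SteepestDescentDirection

variable {E ι : Type*} [NormedAddCommGroup E] [InnerProductSpace ℝ E]

def IsSteepestDescentDir (g : ι → E) (v : E) : Prop :=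
  ∀ w, (⨆ i, ⟪g i, v⟫) + ‖v‖ ^ 2 / 2 ≤ (⨆ i, ⟪g i, w⟫) + ‖w‖ ^ 2 / 2

variable [Finite ι] {g : ι → E} {v : E}

theorem exists_iSup_inner_add_norm_sq_neg [Nonempty ι] (h : ∃ w, ∀ i, ⟪g i, w⟫ < 0) :
    ∃ w, (⨆ i, ⟪g i, w⟫) + ‖w‖ ^ 2 / 2 < 0 := by
  obtain ⟨w, hw⟩ := h
  obtain ⟨i₀, hi₀⟩ := exists_eq_ciSup_of_finite (f := fun i => ⟪g i, w⟫)
  obtain ⟨s, hs, hneg⟩ := exists_pos_mul_add_sq_mul_neg (hw i₀) (‖w‖ ^ 2 / 2)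
  refine ⟨s • w, lt_of_le_of_lt ?_ hneg⟩
  have hsup : (⨆ i, ⟪g i, s • w⟫) ≤ s * ⟪g i₀, w⟫ := ciSup_le fun i => by
    rw [real_inner_smul_right, hi₀]
    exact mul_le_mul_of_nonneg_left (le_ciSup (Finite.bddAbove_range fun j => ⟪g j, w⟫) i) hs.le
  rw [norm_smul, Real.norm_of_nonneg hs.le]
  linarith

namespace IsSteepestDescentDir

theorem inner_le (h : IsSteepestDescentDir g v) (i : ι) : ⟪g i, v⟫ ≤ -(‖v‖ ^ 2 / 2) := by
  have hle := h 0
  have : Nonempty ι := ⟨i⟩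
  simp only [inner_zero_right, ciSup_const, norm_zero] at hle
  linarith [le_ciSup (Finite.bddAbove_range fun j => ⟪g j, v⟫) i]

theorem norm_le (h : IsSteepestDescentDir g v) (i : ι) : ‖v‖ ≤ 2 * ‖g i‖ := by
  have h₁ := h.inner_le i
  have h₂ := neg_le_of_abs_le (abs_real_inner_le_norm (g i) v)
  nlinarith [norm_nonneg v, norm_nonneg (g i)]

/-- Compare `v` with `v + s • u` for small `s > 0`: the max term does not increase, so the
quadratic term may not decrease. -/
theorem inner_nonneg (h : IsSteepestDescentDir g v) {u : E} (hu : ∀ i, ⟪g i, u⟫ ≤ 0) :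
    0 ≤ ⟪v, u⟫ := by
  by_contra! hvu
  obtain ⟨s, hs, hneg⟩ := exists_pos_mul_add_sq_mul_neg (by linarith : 2 * ⟪v, u⟫ < 0) (‖u‖ ^ 2)
  have hsup : (⨆ i, ⟪g i, v + s • u⟫) ≤ ⨆ i, ⟪g i, v⟫ := ciSup_mono (Finite.bddAbove_range _)
    fun i => by
      rw [inner_add_right, real_inner_smul_right]
      nlinarith [hu i]
  have hnorm : ‖v + s • u‖ ^ 2 = ‖v‖ ^ 2 + s * (2 * ⟪v, u⟫) + s ^ 2 * ‖u‖ ^ 2 := by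
    rw [norm_add_sq_real, real_inner_smul_right, norm_smul, Real.norm_of_nonneg hs.le]
    ring
  linarith [h (v + s • u)]

/-- A direction `w` with all `⟪gᵢ, w⟫ < 0` can be rescaled to make the objective negative at
`g`, hence uniformly negative at `G a` eventually, while the optimal values tend to `0`. -/
theorem not_exists_inner_neg_of_tendsto [Nonempty ι] {α : Type*} {l : Filter α} [l.NeBot]
    {G : α → ι → E} {V : α → E} (hdir : ∀ a, IsSteepestDescentDir (G a) (V a))
    (hG : Tendsto G l (𝓝 g)) (hV : Tendsto V l (𝓝 0)) : ¬ ∃ w, ∀ i, ⟪g i, w⟫ < 0 := by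
  intro hcrit
  obtain ⟨w, hw⟩ := exists_iSup_inner_add_norm_sq_neg hcrit
  obtain ⟨c, hc, hcw⟩ : ∃ c > 0, (⨆ i, ⟪g i, w⟫) + ‖w‖ ^ 2 / 2 = -(2 * c) :=
    ⟨-((⨆ i, ⟪g i, w⟫) + ‖w‖ ^ 2 / 2) / 2, by linarith, by ring⟩
  have hGw : ∀ᶠ a in l, ∀ i, ⟪G a i, w⟫ < ⟪g i, w⟫ + c := eventually_all.2 fun i =>
    ((tendsto_pi_nhds.1 hG i).inner (𝕜 := ℝ) tendsto_const_nhds).eventually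
      (eventually_lt_nhds (lt_add_of_pos_right _ hc))
  let i₀ : ι := Classical.arbitrary ι
  have hGV : ∀ᶠ a in l, -c < ⟪G a i₀, V a⟫ := by
    have := (tendsto_pi_nhds.1 hG i₀).inner (𝕜 := ℝ) hV
    rw [inner_zero_right] at this
    exact this.eventually (eventually_gt_nhds (neg_lt_zero.2 hc))
  obtain ⟨a, hGw, hGV⟩ := (hGw.and hGV).exists
  have hsup : (⨆ i, ⟪G a i, w⟫) ≤ (⨆ i, ⟪g i, w⟫) + c := ciSup_le fun i => by
    linarith [hGw i, le_ciSup (Finite.bddAbove_range fun j => ⟪g j, w⟫) i]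
  have hV₀ := le_ciSup (Finite.bddAbove_range fun i => ⟪G a i, V a⟫) i₀
  linarith [hdir a w, sq_nonneg ‖V a‖]

end IsSteepestDescentDir

end SteepestDescentDirection

theorem quasiconvexOn_univ_of_le_max {E : Type*} [AddCommGroup E] [Module ℝ E] {f : E → ℝ}
    (h : ∀ x y : E, ∀ s ∈ Icc (0 : ℝ) 1, f ((1 - s) • x + s • y) ≤ max (f x) (f y)) :
    QuasiconvexOn ℝ univ f := by
  refine quasiconvexOn_iff_le_max.2 ⟨convex_univ, fun x _ y _ a b _ hb hab => ?_⟩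
  obtain rfl : a = 1 - b := by linarith
  exact h x y b ⟨hb, by linarith⟩

section Gradient

variable {E : Type*} [NormedAddCommGroup E] [InnerProductSpace ℝ E] [CompleteSpace E]
  {f : E → ℝ}

theorem ContDiff.continuous_gradient (hf : ContDiff ℝ 1 f) : Continuous (∇ f) :=
  (InnerProductSpace.toDual ℝ E).symm.continuous.comp (hf.continuous_fderiv one_ne_zero)

theorem DifferentiableAt.hasDerivAt_add_smul {p u : E} {s : ℝ}
    (hf : DifferentiableAt ℝ f (p + s • u)) :
    HasDerivAt (fun s : ℝ => f (p + s • u)) ⟪∇ f (p + s • u), u⟫ s := by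
  have hline : HasDerivAt (fun s : ℝ => p + s • u) u s := by
    simpa using ((hasDerivAt_id s).smul_const u).const_add p
  exact hf.hasGradientAt.hasFDerivAt.comp_hasDerivAt s hline

/-- `x` maximizes `f` on the segment `[x, q]`, which lies in the convex sublevel set of `f x`. -/
theorem QuasiconvexOn.inner_gradient_sub_nonpos (hqc : QuasiconvexOn ℝ univ f) {x q : E}
    (hf : DifferentiableAt ℝ f x) (hq : f q ≤ f x) : ⟪∇ f x, q - x⟫ ≤ 0 := by
  have hseg : segment ℝ x q ⊆ {y | f y ≤ f x} := by
    simpa using (hqc (f x)).segment_subset (by simp) (by simpa using hq)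
  have hmax : IsLocalMaxOn f (segment ℝ x q) x :=
    Filter.eventually_of_mem self_mem_nhdsWithin hseg
  exact hmax.hasFDerivWithinAt_nonpos hf.hasGradientAt.hasFDerivAt.hasFDerivWithinAt
    (mem_posTangentConeAt_of_segment_subset (by rw [add_sub_cancel]))

theorem le_add_of_inner_gradient_le (hf : Differentiable ℝ f) {p u : E} {C : ℝ}
    (h : ∀ θ ∈ Icc (0 : ℝ) 1, ⟪∇ f (p + θ • u), u⟫ ≤ C) : f (p + u) ≤ f p + C := by
  have hderiv (θ : ℝ) := (hf (p + θ • u)).hasDerivAt_add_smul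
  have hmvt := (convex_Icc (0 : ℝ) 1).image_sub_le_mul_sub_of_deriv_le
    (fun θ _ => (hderiv θ).continuousAt.continuousWithinAt)
    (fun θ _ => (hderiv θ).differentiableAt.differentiableWithinAt)
    (fun θ hθ => (hderiv θ).deriv ▸ h θ (interior_subset hθ))
    0 (left_mem_Icc.2 zero_le_one) 1 (right_mem_Icc.2 zero_le_one) zero_le_one
  simpa [add_comm] using hmvt

/-- Along the whole step the directional derivative stays below `(1 + β) / 2 * a₀`, which lies
strictly between `a₀ = ⟪∇f p₀, v₀⟫ < 0` and `β * a₀`. -/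
theorem eventually_armijo_of_tendsto (hf : ContDiff ℝ 1 f) {β : ℝ} (hβ : β < 1) {p₀ v₀ : E}
    (hdesc : ⟪∇ f p₀, v₀⟫ < 0) {α : Type*} {l : Filter α} {p v : α → E} {s : α → ℝ}
    (hp : Tendsto p l (𝓝 p₀)) (hv : Tendsto v l (𝓝 v₀)) (hs : Tendsto s l (𝓝 0))
    (hs₀ : ∀ a, 0 ≤ s a) :
    ∀ᶠ a in l, f (p a + s a • v a) ≤ f (p a) + β * s a * ⟪∇ f (p a), v a⟫ := by
  have hgrad : Continuous fun z : E × E => ⟪∇ f z.1, z.2⟫ :=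
    (hf.continuous_gradient.comp continuous_fst).inner continuous_snd
  set a₀ := ⟪∇ f p₀, v₀⟫
  have hsteep : ∀ᶠ z : E × E × ℝ in 𝓝 (p₀, v₀, 0), ∀ θ ∈ Icc (0 : ℝ) 1,
      ⟪∇ f (z.1 + (θ * z.2.2) • z.2.1), z.2.1⟫ < (1 + β) / 2 * a₀ := by
    refine isCompact_Icc.eventually_forall_of_forall_eventually fun θ _ => ?_
    have hcont : Continuous fun y : (E × E × ℝ) × ℝ =>
        ⟪∇ f (y.1.1 + (y.2 * y.1.2.2) • y.1.2.1), y.1.2.1⟫ :=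
      hgrad.comp (f := fun y : (E × E × ℝ) × ℝ => (y.1.1 + (y.2 * y.1.2.2) • y.1.2.1, y.1.2.1))
        (by fun_prop)
    have hlim := hcont.tendsto ((p₀, v₀, 0), θ)
    simp only [mul_zero, zero_smul, add_zero] at hlim
    exact hlim.eventually (eventually_lt_nhds (by nlinarith))
  have hslope : ∀ᶠ a in l, (1 + β) / 2 * a₀ < β * ⟪∇ f (p a), v a⟫ :=
    (((hgrad.tendsto (p₀, v₀)).comp (hp.prodMk_nhds hv)).const_mul β).eventually
      (eventually_gt_nhds (by nlinarith))
  filter_upwards [(hp.prodMk_nhds (hv.prodMk_nhds hs)).eventually hsteep, hslope]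
    with a hsteep hslope
  have harmijo := le_add_of_inner_gradient_le (hf.differentiable one_ne_zero)
    (p := p a) (u := s a • v a) (C := s a * (β * ⟪∇ f (p a), v a⟫)) fun θ hθ => by
      rw [smul_smul, real_inner_smul_right]
      exact mul_le_mul_of_nonneg_left ((hsteep θ hθ).trans hslope).le (hs₀ a)
  linarith

end Gradient

section ArmijoSteepestDescent

variable {n m : ℕ} {f : Fin m → EuclideanSpace ℝ (Fin n) → ℝ} {β : ℝ}

theorem mem_Ioc_of_mem_armijoSet {p v : EuclideanSpace ℝ (Fin n)} {t : ℝ}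
    (ht : t ∈ armijoSet f β p v) : t ∈ Ioc 0 1 := by
  obtain ⟨⟨j, rfl⟩, -⟩ := ht
  exact ⟨by positivity, pow_le_one₀ (by norm_num) (by norm_num)⟩

theorem two_mul_mem_armijoSet {p v : EuclideanSpace ℝ (Fin n)} {t : ℝ}
    (ht : t ∈ armijoSet f β p v) (ht₁ : t < 1)
    (h : ∀ i, f i (p + (2 * t) • v) ≤ f i p + β * (2 * t) * ⟪∇ (f i) p, v⟫) :
    2 * t ∈ armijoSet f β p v := by
  obtain ⟨⟨j, rfl⟩, -⟩ := ht
  refine ⟨?_, h⟩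
  cases j with
  | zero => norm_num at ht₁
  | succ j => exact ⟨j, by rw [pow_succ]; ring⟩

structure IsArmijoSteepestDescent (f : Fin m → EuclideanSpace ℝ (Fin n) → ℝ) (β : ℝ)
    (p v : ℕ → EuclideanSpace ℝ (Fin n)) (t : ℕ → ℝ) : Prop where
  isSteepestDescentDir : ∀ k, IsSteepestDescentDir (fun i => ∇ (f i) (p k)) (v k)
  isGreatest_armijoSet : ∀ k, IsGreatest (armijoSet f β (p k) (v k)) (t k)
  succ : ∀ k, p (k + 1) = p k + t k • v k

namespace IsArmijoSteepestDescent

variable {p v : ℕ → EuclideanSpace ℝ (Fin n)} {t : ℕ → ℝ}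

theorem step_mem_Ioc (hs : IsArmijoSteepestDescent f β p v t) (k : ℕ) : t k ∈ Ioc 0 1 :=
  mem_Ioc_of_mem_armijoSet (hs.isGreatest_armijoSet k).1

theorem apply_succ_add_le (hs : IsArmijoSteepestDescent f β p v t) (hβ : 0 ≤ β) (k : ℕ)
    (i : Fin m) : f i (p (k + 1)) + β / 2 * (t k * ‖v k‖ ^ 2) ≤ f i (p k) := by
  have harmijo := (hs.isGreatest_armijoSet k).1.2 i
  rw [← hs.succ] at harmijo
  have hdesc := mul_le_mul_of_nonneg_left ((hs.isSteepestDescentDir k).inner_le i)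
    (mul_nonneg hβ (hs.step_mem_Ioc k).1.le)
  linarith

theorem antitone_apply (hs : IsArmijoSteepestDescent f β p v t) (hβ : 0 ≤ β) (i : Fin m) :
    Antitone fun k => f i (p k) :=
  antitone_nat_of_succ_le fun k => by
    have ht₀ := (hs.step_mem_Ioc k).1.le
    have hdecrease : 0 ≤ β / 2 * (t k * ‖v k‖ ^ 2) := by positivity
    linarith [hs.apply_succ_add_le hβ k i]

theorem summable (hs : IsArmijoSteepestDescent f β p v t) (hβ : 0 < β) {i : Fin m}
    (hbdd : BddBelow (range fun k => f i (p k))) : Summable fun k => t k * ‖v k‖ ^ 2 := by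
  obtain ⟨b, hb⟩ := hbdd
  refine summable_of_sum_range_le (c := 2 / β * (f i (p 0) - b))
    (fun k => mul_nonneg (hs.step_mem_Ioc k).1.le (sq_nonneg _)) fun N => ?_
  have htelescope : ∑ k ∈ Finset.range N, β / 2 * (t k * ‖v k‖ ^ 2) ≤ f i (p 0) - f i (p N) := by
    rw [← Finset.sum_range_sub' (fun k => f i (p k))]
    exact Finset.sum_le_sum fun k _ => by linarith [hs.apply_succ_add_le hβ.le k i]
  rw [← Finset.mul_sum] at htelescope
  rw [div_mul_eq_mul_div, le_div_iff₀ hβ]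
  linarith [hb ⟨N, rfl⟩]

/-- By quasi-convexity no gradient `∇fᵢ(pᵏ)` increases towards `q`, so `vᵏ` points towards `q`. -/
theorem dist_succ_sq_le (hs : IsArmijoSteepestDescent f β p v t)
    (hf : ∀ i, Differentiable ℝ (f i)) (hqc : ∀ i, QuasiconvexOn ℝ univ (f i))
    {q : EuclideanSpace ℝ (Fin n)} {k : ℕ} (hq : ∀ i, f i q ≤ f i (p k)) :
    dist (p (k + 1)) q ^ 2 ≤ dist (p k) q ^ 2 + t k * ‖v k‖ ^ 2 := by
  obtain ⟨ht₀, ht₁⟩ := hs.step_mem_Ioc k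
  have hvq : 0 ≤ ⟪v k, q - p k⟫ := (hs.isSteepestDescentDir k).inner_nonneg fun i =>
    (hqc i).inner_gradient_sub_nonpos (hf i _) (hq i)
  have hpv : ⟪p k - q, v k⟫ = -⟪v k, q - p k⟫ := by
    rw [real_inner_comm, ← inner_neg_right, neg_sub]
  have hexpand : dist (p (k + 1)) q ^ 2
      = dist (p k) q ^ 2 + 2 * (t k * ⟪p k - q, v k⟫) + t k ^ 2 * ‖v k‖ ^ 2 := by
    rw [dist_eq_norm, dist_eq_norm, hs.succ, add_sub_right_comm, norm_add_sq_real,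
      real_inner_smul_right, norm_smul, Real.norm_of_nonneg ht₀.le]
    ring
  nlinarith [mul_nonneg ht₀.le hvq, mul_le_mul_of_nonneg_right
    (mul_le_of_le_one_right ht₀.le ht₁) (sq_nonneg ‖v k‖)]

/-- If the directions had a nonzero cluster value `v₀`, the steps would tend to zero (the
series `∑ tₖ ‖vₖ‖²` converges), yet near `(p₀, v₀)` the doubled step already satisfies the
Armijo condition, contradicting the maximality of `tₖ`. -/
theorem eq_zero_of_tendsto_subseq (hs : IsArmijoSteepestDescent f β p v t)
    (hf : ∀ i, ContDiff ℝ 1 (f i)) (hβ : β < 1) (hsum : Summable fun k => t k * ‖v k‖ ^ 2)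
    {φ : ℕ → ℕ} (hφ : StrictMono φ) {p₀ v₀ : EuclideanSpace ℝ (Fin n)}
    (hp : Tendsto (p ∘ φ) atTop (𝓝 p₀)) (hv : Tendsto (v ∘ φ) atTop (𝓝 v₀)) : v₀ = 0 := by
  by_contra hv₀
  have hnorm : Tendsto (fun j => ‖v (φ j)‖ ^ 2) atTop (𝓝 (‖v₀‖ ^ 2)) := hv.norm.pow 2
  have hpos : 0 < ‖v₀‖ ^ 2 := by positivity
  have ht : Tendsto (fun j => t (φ j)) atTop (𝓝 0) := by
    have hquot := (hsum.tendsto_atTop_zero.comp hφ.tendsto_atTop).div hnorm hpos.ne'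
    rw [zero_div] at hquot
    refine hquot.congr' ?_
    filter_upwards [hnorm.eventually_ne hpos.ne'] with j hj
    exact mul_div_cancel_right₀ _ hj
  have hdesc (i : Fin m) : ⟪∇ (f i) p₀, v₀⟫ < 0 := by
    have hlim := (((hf i).continuous_gradient.tendsto p₀).comp hp).inner (𝕜 := ℝ) hv
    have hle := le_of_tendsto_of_tendsto' hlim (hnorm.div_const 2).neg
      fun j => (hs.isSteepestDescentDir (φ j)).inner_le i
    linarith
  have harmijo : ∀ᶠ j in atTop, ∀ i, f i (p (φ j) + (2 * t (φ j)) • v (φ j))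
      ≤ f i (p (φ j)) + β * (2 * t (φ j)) * ⟪∇ (f i) (p (φ j)), v (φ j)⟫ :=
    eventually_all.2 fun i => eventually_armijo_of_tendsto (hf i) hβ (hdesc i) hp hv
      (by simpa using ht.const_mul 2) fun j => by linarith [(hs.step_mem_Ioc (φ j)).1]
  obtain ⟨j, harmijo, ht₁⟩ := (harmijo.and (ht.eventually (eventually_lt_nhds one_pos))).exists
  have hmax := (hs.isGreatest_armijoSet (φ j)).2
    (two_mul_mem_armijoSet (hs.isGreatest_armijoSet (φ j)).1 ht₁ harmijo)
  linarith [(hs.step_mem_Ioc (φ j)).1]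

theorem exists_tendsto_subseq (hs : IsArmijoSteepestDescent f β p v t)
    (hf : ∀ i, ContDiff ℝ 1 (f i)) (hqc : ∀ i, QuasiconvexOn ℝ univ (f i)) (hβ : β ∈ Ioo 0 1)
    (i₀ : Fin m) {q : EuclideanSpace ℝ (Fin n)} (hq : ∀ k i, f i q ≤ f i (p k)) :
    ∃ p₀, ∃ φ : ℕ → ℕ,
      StrictMono φ ∧ Tendsto (p ∘ φ) atTop (𝓝 p₀) ∧ Tendsto (v ∘ φ) atTop (𝓝 0) := by
  have hsum := hs.summable hβ.1 (i := i₀) ⟨f i₀ q, by rintro _ ⟨k, rfl⟩; exact hq k i₀⟩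
  have hpb : IsBounded (range p) := isBounded_range_of_quasiFejer hsum
    (fun k => mul_nonneg (hs.step_mem_Ioc k).1.le (sq_nonneg _))
    fun k => hs.dist_succ_sq_le (fun i => (hf i).differentiable one_ne_zero) hqc (hq k)
  obtain ⟨C, hC⟩ := hpb.isCompact_closure.exists_bound_of_continuousOn
    (hf i₀).continuous_gradient.continuousOn
  have hvb : IsBounded (range v) := isBounded_iff_forall_norm_le.2 ⟨2 * C, by
    rintro _ ⟨k, rfl⟩
    linarith [(hs.isSteepestDescentDir k).norm_le i₀, hC _ (subset_closure ⟨k, rfl⟩)]⟩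
  obtain ⟨⟨p₀, v₀⟩, -, φ, hφ, hlim⟩ :=
    tendsto_subseq_of_bounded (hpb.prod hvb) fun k => mk_mem_prod ⟨k, rfl⟩ ⟨k, rfl⟩
  have hv₀ := hs.eq_zero_of_tendsto_subseq hf hβ.2 hsum hφ hlim.fst_nhds hlim.snd_nhds
  exact ⟨p₀, φ, hφ, hlim.fst_nhds, hv₀ ▸ hlim.snd_nhds⟩

theorem apply_le_of_tendsto_subseq (hs : IsArmijoSteepestDescent f β p v t) (hβ : 0 ≤ β)
    (hf : ∀ i, Continuous (f i)) {φ : ℕ → ℕ} (hφ : StrictMono φ) {p₀ : EuclideanSpace ℝ (Fin n)}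
    (hp : Tendsto (p ∘ φ) atTop (𝓝 p₀)) (k : ℕ) (i : Fin m) : f i p₀ ≤ f i (p k) :=
  (hs.antitone_apply hβ i).le_of_tendsto
    ((tendsto_iff_tendsto_subseq_of_antitone (hs.antitone_apply hβ i) hφ.tendsto_atTop).2
      (((hf i).tendsto p₀).comp hp)) k

theorem tendsto_of_tendsto_subseq (hs : IsArmijoSteepestDescent f β p v t) (hβ : 0 < β)
    (hf : ∀ i, ContDiff ℝ 1 (f i)) (hqc : ∀ i, QuasiconvexOn ℝ univ (f i)) (i₀ : Fin m)
    {φ : ℕ → ℕ} (hφ : StrictMono φ) {p₀ : EuclideanSpace ℝ (Fin n)}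
    (hp : Tendsto (p ∘ φ) atTop (𝓝 p₀)) : Tendsto p atTop (𝓝 p₀) := by
  have hp₀ := hs.apply_le_of_tendsto_subseq hβ.le (fun i => (hf i).continuous) hφ hp
  have hsum := hs.summable hβ (i := i₀) ⟨f i₀ p₀, by rintro _ ⟨k, rfl⟩; exact hp₀ k i₀⟩
  exact tendsto_of_quasiFejer_of_subseq hsum
    (fun k => mul_nonneg (hs.step_mem_Ioc k).1.le (sq_nonneg _))
    (fun k => hs.dist_succ_sq_le (fun i => (hf i).differentiable one_ne_zero) hqc (hp₀ k ·))
    hφ hp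

end IsArmijoSteepestDescent

end ArmijoSteepestDescent

theorem steepest_descent_full_convergence_general
    {n m : ℕ} (hm : 0 < m) (f : Fin m → EuclideanSpace ℝ (Fin n) → ℝ)
    (hf : ∀ i, ContDiff ℝ 1 (f i))
    -- quasi-convexity of `F`
    (hqc : ∀ p q : EuclideanSpace ℝ (Fin n), ∀ s ∈ Set.Icc (0 : ℝ) 1, ∀ i,
      f i ((1 - s) • p + s • q) ≤ max (f i p) (f i q))
    (β : ℝ) (hβ : β ∈ Set.Ioo (0 : ℝ) 1)
    (p v : ℕ → EuclideanSpace ℝ (Fin n)) (t : ℕ → ℝ)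
    -- `vᵏ` is the steepest descent direction at `pᵏ`
    (hv : ∀ k w,
      (⨆ i, (inner ℝ (gradient (f i) (p k)) (v k) : ℝ)) + ‖v k‖ ^ 2 / 2 ≤
        (⨆ i, (inner ℝ (gradient (f i) (p k)) w : ℝ)) + ‖w‖ ^ 2 / 2)
    -- `tₖ` is the largest Armijo steplength of the form `2⁻ʲ`
    (ht : ∀ k, IsGreatest (armijoSet f β (p k) (v k)) (t k))
    (hp : ∀ k, p (k + 1) = p k + t k • v k)
    (hU : {q : EuclideanSpace ℝ (Fin n) | ∀ k i, f i q ≤ f i (p k)}.Nonempty) :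
    ∃ pbar : EuclideanSpace ℝ (Fin n), Tendsto p atTop (nhds pbar) ∧
      ¬ ∃ w, ∀ i, (inner ℝ (gradient (f i) pbar) w : ℝ) < 0 := by
  have hs : IsArmijoSteepestDescent f β p v t := ⟨hv, ht, hp⟩
  have hqc' (i : Fin m) : QuasiconvexOn ℝ univ (f i) :=
    quasiconvexOn_univ_of_le_max fun x y s hs => hqc x y s hs i
  let i₀ : Fin m := ⟨0, hm⟩
  have : Nonempty (Fin m) := ⟨i₀⟩
  obtain ⟨q, hq⟩ := hU
  obtain ⟨pbar, φ, hφ, hpφ, hvφ⟩ := hs.exists_tendsto_subseq hf hqc' hβ i₀ hq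
  refine ⟨pbar, hs.tendsto_of_tendsto_subseq hβ.1 hf hqc' i₀ hφ hpφ, ?_⟩
  exact IsSteepestDescentDir.not_exists_inner_neg_of_tendsto
    (fun j => hs.isSteepestDescentDir (φ j))
    (tendsto_pi_nhds.2 fun i => ((hf i).continuous_gradient.tendsto pbar).comp hpφ) hvφ

/-- Theorem 22 (Euclidean case): if `F` is quasi-convex and the set
`U = {p : F(p) ≼ F(pᵏ) ∀k}` is nonempty, then the sequence `(pᵏ)` generated by
the steepest descent method with Armijo rule converges to a Pareto critical
point of `F`. -/
theorem steepest_descent_full_convergence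
    {n m : ℕ} (hm : 0 < m) (f : Fin m → EuclideanSpace ℝ (Fin n) → ℝ)
    (hf : ∀ i, ContDiff ℝ 1 (f i))
    -- quasi-convexity of `F`
    (hqc : ∀ p q : EuclideanSpace ℝ (Fin n), ∀ s ∈ Set.Icc (0 : ℝ) 1, ∀ i,
      f i ((1 - s) • p + s • q) ≤ max (f i p) (f i q))
    (β : ℝ) (hβ : β ∈ Set.Ioo (0 : ℝ) 1)
    (p v : ℕ → EuclideanSpace ℝ (Fin n)) (t : ℕ → ℝ)
    -- each `pᵏ` is not Pareto critical
    (hcrit : ∀ k, ∃ w, ∀ i, (inner ℝ (gradient (f i) (p k)) w : ℝ) < 0)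
    -- `vᵏ` is the steepest descent direction at `pᵏ`
    (hv : ∀ k w,
      (⨆ i, (inner ℝ (gradient (f i) (p k)) (v k) : ℝ)) + ‖v k‖ ^ 2 / 2 ≤
        (⨆ i, (inner ℝ (gradient (f i) (p k)) w : ℝ)) + ‖w‖ ^ 2 / 2)
    -- `tₖ` is the largest Armijo steplength of the form `2⁻ʲ`
    (ht : ∀ k, IsGreatest (armijoSet f β (p k) (v k)) (t k))
    (hp : ∀ k, p (k + 1) = p k + t k • v k)
    (hU : {q : EuclideanSpace ℝ (Fin n) | ∀ k i, f i q ≤ f i (p k)}.Nonempty) :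
    ∃ pbar : EuclideanSpace ℝ (Fin n), Tendsto p atTop (nhds pbar) ∧
      ¬ ∃ w, ∀ i, (inner ℝ (gradient (f i) pbar) w : ℝ) < 0 :=
  steepest_descent_full_convergence_general hm f hf hqc β hβ p v t hv ht hp hU
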